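/- arXiv:1809.02498 — 3 statements merged into one kernel-verified Lean document; each statement's English description precedes it below -/
import Mathlib

section
/- Let θ ∈ C¹([0,1]) be positive, let β > 0, v ∈ C([0,1]) with 0 < c₀ ≤ v(x) ≤ C₀, and set η = min{1,β}/2. Then max_{x∈[0,1]} θ(x)^{2+β−η} ≤ C(∫₀¹ θ dx)^{2+β−η} + C (∫₀¹ (θ^β θ_x²)/(v θ^{1+η}) dx) · (∫₀¹ v θ dx), where C depends only on β, c₀, C₀. -/
open Set Real intervalIntegral

/-!
Put `α = (2 + β - η) / 2`. By the mean value theorem for integrals `θ(x₀) = ∫₀¹ θ` at some `x₀`,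
so `θ(x)^α - (∫₀¹ θ)^α = ∫_{x₀}^x α θ^{α-1} θ_x`. Since `θ^{2(α-1)} θ_x² / (v θ)` is exactly the
dissipation density `θ^β θ_x² / (v θ^{1+η})`, Cauchy–Schwarz with weight `v θ` bounds the square of
this integral by `α²` times the product of the two weighted integrals. Squaring
`θ(x)^α ≤ (∫₀¹ θ)^α + ∫₀¹ |α θ^{α-1} θ_x|` then gives the estimate with `C = 2 (1 + α²)`.
-/

open MeasureTheory in
theorem sq_integral_le_integral_sq_div_mul_integral {α : Type*} [MeasurableSpace α]
    {μ : Measure α} {f w : α → ℝ} (hf : Integrable f μ)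
    (hfw : Integrable (fun x => f x ^ 2 / w x) μ) (hw : Integrable w μ)
    (hw_pos : ∀ᵐ x ∂μ, 0 < w x) :
    (∫ x, f x ∂μ) ^ 2 ≤ (∫ x, f x ^ 2 / w x ∂μ) * ∫ x, w x ∂μ := by
  have hquad : ∀ t : ℝ, 0 ≤ (∫ x, f x ^ 2 / w x ∂μ) * (t * t)
      + (-2 * ∫ x, f x ∂μ) * t + ∫ x, w x ∂μ := by
    intro t
    have hpt : ∀ᵐ x ∂μ, 0 ≤ t * t * (f x ^ 2 / w x) + -2 * t * f x + w x := by
      filter_upwards [hw_pos] with x hx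
      have hsq : t * t * (f x ^ 2 / w x) + -2 * t * f x + w x = (t * f x - w x) ^ 2 / w x := by
        field_simp; ring
      rw [hsq]; positivity
    have h := integral_nonneg_of_ae hpt
    rw [integral_add (f := fun x => t * t * (f x ^ 2 / w x) + -2 * t * f x)
        ((hfw.const_mul _).add (hf.const_mul _)) hw,
      integral_add (hfw.const_mul _) (hf.const_mul _), MeasureTheory.integral_const_mul,
      MeasureTheory.integral_const_mul] at h
    linarith
  have hd := discrim_le_zero hquad
  rw [discrim] at hd
  linarith

theorem norm_sub_le_integral_norm_deriv {E : Type*} [NormedAddCommGroup E] [NormedSpace ℝ E]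
    [CompleteSpace E] {F F' : ℝ → E} {a b x y : ℝ}
    (hF : ∀ z ∈ Icc a b, HasDerivAt F (F' z) z)
    (hF' : IntervalIntegrable F' MeasureTheory.volume a b)
    (hx : x ∈ Icc a b) (hy : y ∈ Icc a b) :
    ‖F x - F y‖ ≤ ∫ z in a..b, ‖F' z‖ := by
  have hab : a ≤ b := hx.1.trans hx.2
  have hsub : uIcc y x ⊆ Icc a b := ordConnected_Icc.uIcc_subset hy hx
  rw [← integral_eq_sub_of_hasDerivAt (fun z hz => hF z (hsub hz))
    (hF'.mono_set (by rwa [uIcc_of_le hab])), integral_of_le hab]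
  refine norm_integral_le_integral_norm_uIoc.trans
    (MeasureTheory.setIntegral_mono_set
      ((intervalIntegrable_iff_integrableOn_Ioc_of_le hab).mp hF'.norm) ?_ ?_)
  · exact Filter.Eventually.of_forall fun z => norm_nonneg _
  · exact Filter.Eventually.of_forall (Ioc_subset_Ioc (le_min hy.1 hx.1) (max_le hy.2 hx.2))

theorem sq_integral_le_integral_sq_div_mul_integral_of_continuousOn {f w : ℝ → ℝ} {a b : ℝ}
    (hab : a ≤ b) (hf : ContinuousOn f (Icc a b)) (hw : ContinuousOn w (Icc a b))
    (hw_pos : ∀ x ∈ Icc a b, 0 < w x) :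
    (∫ x in a..b, f x) ^ 2 ≤ (∫ x in a..b, f x ^ 2 / w x) * ∫ x in a..b, w x := by
  have hfw : ContinuousOn (fun x => f x ^ 2 / w x) (Icc a b) :=
    (hf.pow 2).div hw fun x hx => (hw_pos x hx).ne'
  simp only [integral_of_le hab]
  exact sq_integral_le_integral_sq_div_mul_integral
    (hf.integrableOn_Icc.mono_set Ioc_subset_Icc_self)
    (hfw.integrableOn_Icc.mono_set Ioc_subset_Icc_self)
    (hw.integrableOn_Icc.mono_set Ioc_subset_Icc_self)
    (MeasureTheory.ae_restrict_of_forall_mem measurableSet_Ioc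
      fun x hx => hw_pos x (Ioc_subset_Icc_self hx))

theorem rpow_sub_average_rpow_le {θ θ' : ℝ → ℝ} {a b : ℝ} (α : ℝ) (hab : a < b)
    (hθ : ∀ x ∈ Icc a b, HasDerivAt θ (θ' x) x) (hθ' : ContinuousOn θ' (Icc a b))
    (hθ_pos : ∀ x ∈ Icc a b, 0 < θ x) {x : ℝ} (hx : x ∈ Icc a b) :
    θ x ^ α - (⨍ y in a..b, θ y) ^ α ≤ ∫ y in a..b, |θ' y * α * θ y ^ (α - 1)| := by
  have hθc : ContinuousOn θ (Icc a b) := fun y hy => (hθ y hy).continuousAt.continuousWithinAt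
  have hθ_ne : ∀ y ∈ Icc a b, θ y ≠ 0 := fun y hy => (hθ_pos y hy).ne'
  obtain ⟨x₀, hx₀, hθx₀⟩ := exists_eq_interval_average hab.ne (by rwa [uIcc_of_le hab.le])
  rw [← hθx₀]
  refine (le_abs_self _).trans (norm_sub_le_integral_norm_deriv
    (fun y hy => (hθ y hy).rpow_const (p := α) (Or.inl (hθ_ne y hy))) ?_ hx ?_)
  · exact ((hθ'.mul continuousOn_const).mul
      (hθc.rpow_const fun y hy => Or.inl (hθ_ne y hy))).intervalIntegrable_of_Icc hab.le
  · rw [uIoo_of_le hab.le] at hx₀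
    exact Ioo_subset_Icc_self hx₀

theorem sq_rpow_deriv_div_eq {θ θ' v α β η : ℝ} (hθ : 0 < θ) (hα : 2 * (α - 1) = β - η) :
    (θ' * α * θ ^ (α - 1)) ^ 2 / (v * θ) = α ^ 2 * (θ ^ β * θ' ^ 2 / (v * θ ^ (1 + η))) := by
  have hpow : (θ ^ (α - 1)) ^ 2 / θ = θ ^ β / θ ^ (1 + η) := by
    rw [div_eq_div_iff hθ.ne' (rpow_pos_of_pos hθ _).ne', ← rpow_add_one hθ.ne',
      ← rpow_mul_natCast hθ.le, ← rpow_add hθ]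
    congr 1
    push_cast
    linarith
  calc (θ' * α * θ ^ (α - 1)) ^ 2 / (v * θ) = α ^ 2 * θ' ^ 2 / v * ((θ ^ (α - 1)) ^ 2 / θ) := by
        ring
    _ = _ := by rw [hpow]; ring

theorem sq_integral_abs_rpow_deriv_le {θ θ' v : ℝ → ℝ} {a b α β η : ℝ} (hab : a ≤ b)
    (hα : 2 * (α - 1) = β - η) (hθ : ContinuousOn θ (Icc a b)) (hθ' : ContinuousOn θ' (Icc a b))
    (hv : ContinuousOn v (Icc a b)) (hθ_pos : ∀ x ∈ Icc a b, 0 < θ x)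
    (hv_pos : ∀ x ∈ Icc a b, 0 < v x) :
    (∫ y in a..b, |θ' y * α * θ y ^ (α - 1)|) ^ 2 ≤
      α ^ 2 * (∫ y in a..b, θ y ^ β * θ' y ^ 2 / (v y * θ y ^ (1 + η))) *
        ∫ y in a..b, v y * θ y := by
  have hG : ContinuousOn (fun y => |θ' y * α * θ y ^ (α - 1)|) (Icc a b) :=
    ((hθ'.mul continuousOn_const).mul
      (hθ.rpow_const fun y hy => Or.inl (hθ_pos y hy).ne')).abs
  have hGD : (∫ y in a..b, |θ' y * α * θ y ^ (α - 1)| ^ 2 / (v y * θ y)) =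
      α ^ 2 * ∫ y in a..b, θ y ^ β * θ' y ^ 2 / (v y * θ y ^ (1 + η)) := by
    rw [← integral_const_mul]
    refine integral_congr fun y hy => ?_
    rw [uIcc_of_le hab] at hy
    simp only [sq_abs]
    exact sq_rpow_deriv_div_eq (hθ_pos y hy) hα
  rw [← hGD]
  exact sq_integral_le_integral_sq_div_mul_integral_of_continuousOn (w := fun y => v y * θ y) hab
    hG (hv.mul hθ) fun y hy => mul_pos (hv_pos y hy) (hθ_pos y hy)

theorem pointwise_temperature_estimate_general (β c₀ C₀ : ℝ)
    (hc₀ : 0 < c₀) :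
    ∃ C > 0, ∀ θ θ' v : ℝ → ℝ,
      (∀ x ∈ Set.Icc (0:ℝ) 1, HasDerivAt θ (θ' x) x) →
      ContinuousOn θ' (Set.Icc 0 1) →
      (∀ x ∈ Set.Icc (0:ℝ) 1, 0 < θ x) →
      ContinuousOn v (Set.Icc 0 1) →
      (∀ x ∈ Set.Icc (0:ℝ) 1, c₀ ≤ v x ∧ v x ≤ C₀) →
      ∀ x ∈ Set.Icc (0:ℝ) 1,
        θ x ^ (2 + β - min 1 β / 2) ≤
          C * (∫ y in (0:ℝ)..1, θ y) ^ (2 + β - min 1 β / 2)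
          + C * (∫ y in (0:ℝ)..1,
              θ y ^ β * θ' y ^ 2 / (v y * θ y ^ (1 + min 1 β / 2)))
            * ∫ y in (0:ℝ)..1, v y * θ y := by
  set η := min 1 β / 2
  set α := (2 + β - η) / 2 with hα
  have hα2 : 2 * (α - 1) = β - η := by rw [hα]; ring
  refine ⟨2 * (1 + α ^ 2), by positivity, ?_⟩
  intro θ θ' v hθ hθ' hθ_pos hv hv_bd x hx
  have hv_pos : ∀ y ∈ Icc (0:ℝ) 1, 0 < v y := fun y hy => hc₀.trans_le (hv_bd y hy).1
  have hosc := rpow_sub_average_rpow_le α one_pos hθ hθ' hθ_pos hx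
  rw [interval_average_eq_div, sub_zero, div_one] at hosc
  have hCS := sq_integral_abs_rpow_deriv_le zero_le_one hα2
    (fun y hy => (hθ y hy).continuousAt.continuousWithinAt) hθ' hv hθ_pos hv_pos
  have hI : 0 ≤ ∫ y in (0:ℝ)..1, θ y := integral_nonneg zero_le_one fun y hy => (hθ_pos y hy).le
  have hD : 0 ≤ ∫ y in (0:ℝ)..1, θ y ^ β * θ' y ^ 2 / (v y * θ y ^ (1 + η)) :=
    integral_nonneg zero_le_one fun y hy => by
      have := hθ_pos y hy; have := hv_pos y hy; positivity
  have hE : 0 ≤ ∫ y in (0:ℝ)..1, v y * θ y :=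
    integral_nonneg zero_le_one fun y hy => (mul_pos (hv_pos y hy) (hθ_pos y hy)).le
  have hsq : ∀ z : ℝ, 0 ≤ z → z ^ (2 + β - η) = (z ^ α) ^ 2 := fun z hz => by
    rw [← rpow_mul_natCast hz]; congr 1; push_cast; linarith
  rw [hsq _ (hθ_pos x hx).le, hsq _ hI]
  set I := ∫ y in (0:ℝ)..1, θ y
  set J := ∫ y in (0:ℝ)..1, |θ' y * α * θ y ^ (α - 1)|
  calc (θ x ^ α) ^ 2 ≤ (I ^ α + J) ^ 2 :=
        pow_le_pow_left₀ (rpow_nonneg (hθ_pos x hx).le _) (by linarith) 2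
    _ ≤ 2 * ((I ^ α) ^ 2 + J ^ 2) := add_sq_le
    _ ≤ _ := by nlinarith [sq_nonneg (I ^ α), sq_nonneg α, mul_nonneg hD hE]

theorem pointwise_temperature_estimate (β c₀ C₀ : ℝ)
    (hβ : 0 < β) (hc₀ : 0 < c₀) (hC₀ : c₀ ≤ C₀) :
    ∃ C > 0, ∀ θ θ' v : ℝ → ℝ,
      (∀ x ∈ Set.Icc (0:ℝ) 1, HasDerivAt θ (θ' x) x) →
      ContinuousOn θ' (Set.Icc 0 1) →
      (∀ x ∈ Set.Icc (0:ℝ) 1, 0 < θ x) →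
      ContinuousOn v (Set.Icc 0 1) →
      (∀ x ∈ Set.Icc (0:ℝ) 1, c₀ ≤ v x ∧ v x ≤ C₀) →
      ∀ x ∈ Set.Icc (0:ℝ) 1,
        θ x ^ (2 + β - min 1 β / 2) ≤
          C * (∫ y in (0:ℝ)..1, θ y) ^ (2 + β - min 1 β / 2)
          + C * (∫ y in (0:ℝ)..1,
              θ y ^ β * θ' y ^ 2 / (v y * θ y ^ (1 + min 1 β / 2)))
            * ∫ y in (0:ℝ)..1, v y * θ y :=
  pointwise_temperature_estimate_general β c₀ C₀ hc₀
end

section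
/- Under the same hypotheses as the representation lower bound, one additionally has the pointwise upper estimate v(x,t) ≤ C³ D₂(x,t) + k C⁴ D₂(x,t) · sup_{τ} D₂(x,τ)⁻¹ · ∫₀ᵗ θ(x,τ) dτ; in particular, if additionally 1 ≤ D₂ ≤ C, then v(x,t) ≤ C₁ + C₁ ∫₀ᵗ θ(x,τ) dτ for a constant C₁ depending only on C and k. -/
open Set Real intervalIntegral

theorem volume_upper_bound_from_representation (T C k : ℝ)
    (hT : 0 < T) (hC : 0 < C) (hk : 0 < k)
    (B : ℝ → ℝ) (D₁ D₂ θ v : ℝ → ℝ → ℝ)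
    (hB : ∀ x ∈ Set.Icc (0:ℝ) 1, C⁻¹ ≤ B x ∧ B x ≤ C)
    (hD₁ : ∀ x ∈ Set.Icc (0:ℝ) 1, ∀ t ∈ Set.Icc (0:ℝ) T,
      C⁻¹ ≤ D₁ x t ∧ D₁ x t ≤ C)
    (hD₂ : ∀ x ∈ Set.Icc (0:ℝ) 1, ∀ t ∈ Set.Icc (0:ℝ) T, 1 ≤ D₂ x t)
    (hθnn : ∀ x ∈ Set.Icc (0:ℝ) 1, ∀ t ∈ Set.Icc (0:ℝ) T, 0 ≤ θ x t)
    (hθc : ∀ x ∈ Set.Icc (0:ℝ) 1, ContinuousOn (θ x) (Set.Icc 0 T))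
    (hv : ∀ x ∈ Set.Icc (0:ℝ) 1, ∀ t ∈ Set.Icc (0:ℝ) T,
      v x t = B x * D₁ x t * D₂ x t *
        (1 + (k / B x) * ∫ τ in (0:ℝ)..t, θ x τ / (D₁ x τ * D₂ x τ))) :
    (∀ x ∈ Set.Icc (0:ℝ) 1, ∀ t ∈ Set.Icc (0:ℝ) T,
      v x t ≤ C ^ 3 * D₂ x t +
        k * C ^ 4 * D₂ x t * (⨆ τ : Set.Icc (0:ℝ) T, (D₂ x τ)⁻¹) *
          ∫ τ in (0:ℝ)..t, θ x τ) ∧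
    ((∀ x ∈ Set.Icc (0:ℝ) 1, ∀ t ∈ Set.Icc (0:ℝ) T, D₂ x t ≤ C) →
      ∃ C₁ > 0, ∀ x ∈ Set.Icc (0:ℝ) 1, ∀ t ∈ Set.Icc (0:ℝ) T,
        v x t ≤ C₁ + C₁ * ∫ τ in (0:ℝ)..t, θ x τ) := by
  haveI : Nonempty (Set.Icc (0:ℝ) T) := ⟨⟨0, le_refl 0, hT.le⟩⟩
  have h0mem : (0:ℝ) ∈ Set.Icc (0:ℝ) 1 := ⟨le_refl 0, by norm_num⟩
  have hC1 : 1 ≤ C := by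
    have h := hB 0 h0mem
    have hinv : C⁻¹ ≤ C := h.1.trans h.2
    nlinarith [mul_le_mul_of_nonneg_right hinv hC.le, inv_mul_cancel₀ hC.ne']
  -- properties of the sup
  have key : ∀ x ∈ Set.Icc (0:ℝ) 1, ∀ t ∈ Set.Icc (0:ℝ) T,
      v x t ≤ C ^ 3 * D₂ x t +
        k * C ^ 4 * D₂ x t * (⨆ τ : Set.Icc (0:ℝ) T, (D₂ x τ)⁻¹) *
          ∫ τ in (0:ℝ)..t, θ x τ := by
    intro x hx t ht
    set S : ℝ := ⨆ τ : Set.Icc (0:ℝ) T, (D₂ x τ)⁻¹ with hSdef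
    have hbdd : BddAbove (Set.range fun τ : Set.Icc (0:ℝ) T => (D₂ x τ)⁻¹) := by
      refine ⟨1, ?_⟩
      rintro y ⟨τ, rfl⟩
      exact inv_le_one_of_one_le₀ (hD₂ x hx τ τ.2)
    have hS1 : S ≤ 1 := ciSup_le fun τ => inv_le_one_of_one_le₀ (hD₂ x hx τ τ.2)
    have hS0 : 0 ≤ S := by
      refine le_trans ?_ (le_ciSup hbdd (⟨0, le_refl 0, hT.le⟩ : Set.Icc (0:ℝ) T))
      exact inv_nonneg.mpr (le_trans zero_le_one (hD₂ x hx 0 ⟨le_refl 0, hT.le⟩))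
    have hBx := hB x hx
    have hBpos : 0 < B x := lt_of_lt_of_le (inv_pos.mpr hC) hBx.1
    have hD₂t := hD₂ x hx t ht
    have hθint : IntervalIntegrable (θ x) MeasureTheory.volume 0 t :=
      ((hθc x hx).mono (Set.Icc_subset_Icc le_rfl ht.2)).intervalIntegrable_of_Icc ht.1
    have hJ0 : 0 ≤ ∫ τ in (0:ℝ)..t, θ x τ :=
      intervalIntegral.integral_nonneg ht.1
        (fun τ hτ => hθnn x hx τ ⟨hτ.1, hτ.2.trans ht.2⟩)
    have hkB : k / B x ≤ k * C := by
      rw [div_eq_mul_inv]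
      refine mul_le_mul_of_nonneg_left ?_ hk.le
      rw [inv_le_comm₀ hBpos hC]
      exact hBx.1
    set I : ℝ := ∫ τ in (0:ℝ)..t, θ x τ / (D₁ x τ * D₂ x τ) with hIdef
    rw [hv x hx t ht]
    by_cases hint : IntervalIntegrable
        (fun τ => θ x τ / (D₁ x τ * D₂ x τ)) MeasureTheory.volume 0 t
    · have hptwise : ∀ τ ∈ Set.Icc (0:ℝ) t,
          θ x τ / (D₁ x τ * D₂ x τ) ≤ C * S * θ x τ := by
        intro τ hτ
        have hτT : τ ∈ Set.Icc (0:ℝ) T := ⟨hτ.1, hτ.2.trans ht.2⟩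
        have hθτ := hθnn x hx τ hτT
        have hD₁τ := hD₁ x hx τ hτT
        have hD₂τ := hD₂ x hx τ hτT
        have hD₁pos : 0 < D₁ x τ := lt_of_lt_of_le (inv_pos.mpr hC) hD₁τ.1
        have hD₂pos : (0:ℝ) < D₂ x τ := lt_of_lt_of_le one_pos hD₂τ
        have hD₁inv : (D₁ x τ)⁻¹ ≤ C := by
          rw [inv_le_comm₀ hD₁pos hC]; exact hD₁τ.1
        have hSτ : (D₂ x τ)⁻¹ ≤ S := le_ciSup hbdd (⟨τ, hτT⟩ : Set.Icc (0:ℝ) T)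
        rw [div_eq_mul_inv, mul_inv, ← mul_assoc]
        calc θ x τ * (D₁ x τ)⁻¹ * (D₂ x τ)⁻¹
            ≤ (θ x τ * C) * S := by
              refine mul_le_mul (mul_le_mul_of_nonneg_left hD₁inv hθτ) hSτ
                (by positivity) (by positivity)
          _ = C * S * θ x τ := by ring
      have hI0 : 0 ≤ I := intervalIntegral.integral_nonneg ht.1
        (fun τ hτ => by
          have hτT : τ ∈ Set.Icc (0:ℝ) T := ⟨hτ.1, hτ.2.trans ht.2⟩
          have hD₁pos : 0 < D₁ x τ := lt_of_lt_of_le (inv_pos.mpr hC) (hD₁ x hx τ hτT).1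
          have hD₂pos : (0:ℝ) < D₂ x τ := lt_of_lt_of_le one_pos (hD₂ x hx τ hτT)
          exact div_nonneg (hθnn x hx τ hτT) (by positivity))
      have hIle : I ≤ C * S * ∫ τ in (0:ℝ)..t, θ x τ := by
        have := intervalIntegral.integral_mono_on ht.1 hint
          ((hθint.const_mul (C * S))) hptwise
        simpa [intervalIntegral.integral_const_mul] using this
      set J : ℝ := ∫ τ in (0:ℝ)..t, θ x τ with hJdef
      have hfac : 1 + (k / B x) * I ≤ 1 + k * C * (C * S * J) := by
        have h1 : (k / B x) * I ≤ (k * C) * (C * S * J) :=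
          mul_le_mul hkB hIle hI0 (by positivity)
        linarith
      have hfac0 : 0 ≤ 1 + (k / B x) * I :=
        add_nonneg one_pos.le (mul_nonneg (by positivity) hI0)
      have hD₁t := hD₁ x hx t ht
      have hprod : B x * D₁ x t * D₂ x t * (1 + (k / B x) * I)
          ≤ C * C * D₂ x t * (1 + k * C * (C * S * J)) := by
        refine mul_le_mul ?_ hfac hfac0 (by positivity)
        refine mul_le_mul ?_ le_rfl (by linarith) (by positivity)
        exact mul_le_mul hBx.2 hD₁t.2 (le_trans (by positivity) hD₁t.1) hC.le
      refine hprod.trans ?_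
      nlinarith [mul_nonneg (mul_nonneg (sub_nonneg.mpr hC1) (sq_nonneg C)) (le_trans one_pos.le hD₂t),
        mul_nonneg hS0 hJ0, mul_nonneg (mul_nonneg hS0 hJ0) (le_trans one_pos.le hD₂t)]
    · have hIz : I = 0 := intervalIntegral.integral_undef hint
      rw [← hIdef, hIz]
      have hD₁t := hD₁ x hx t ht
      have h1 : B x * D₁ x t * D₂ x t * (1 + k / B x * 0) = B x * D₁ x t * D₂ x t := by ring
      rw [h1]
      have h2 : B x * D₁ x t * D₂ x t ≤ C * C * D₂ x t := by
        refine mul_le_mul ?_ le_rfl (by linarith) (by positivity)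
        exact mul_le_mul hBx.2 hD₁t.2 (le_trans (by positivity) hD₁t.1) hC.le
      refine h2.trans ?_
      nlinarith [mul_nonneg (mul_nonneg (sub_nonneg.mpr hC1) (sq_nonneg C)) (le_trans one_pos.le hD₂t),
        mul_nonneg (mul_nonneg (mul_nonneg hk.le (by positivity : (0:ℝ) ≤ C^4)) (le_trans one_pos.le hD₂t)) (mul_nonneg hS0 hJ0)]
  refine ⟨key, ?_⟩
  intro hD₂C
  refine ⟨C ^ 4 + k * C ^ 5, by positivity, ?_⟩
  intro x hx t ht
  have hk1 := key x hx t ht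
  set S : ℝ := ⨆ τ : Set.Icc (0:ℝ) T, (D₂ x τ)⁻¹ with hSdef
  have hS1 : S ≤ 1 := ciSup_le fun τ => inv_le_one_of_one_le₀ (hD₂ x hx τ τ.2)
  have hbdd : BddAbove (Set.range fun τ : Set.Icc (0:ℝ) T => (D₂ x τ)⁻¹) := by
    refine ⟨1, ?_⟩
    rintro y ⟨τ, rfl⟩
    exact inv_le_one_of_one_le₀ (hD₂ x hx τ τ.2)
  have hS0 : 0 ≤ S := by
    refine le_trans ?_ (le_ciSup hbdd (⟨0, le_refl 0, hT.le⟩ : Set.Icc (0:ℝ) T))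
    exact inv_nonneg.mpr (le_trans zero_le_one (hD₂ x hx 0 ⟨le_refl 0, hT.le⟩))
  have hJ0 : 0 ≤ ∫ τ in (0:ℝ)..t, θ x τ :=
    intervalIntegral.integral_nonneg ht.1
      (fun τ hτ => hθnn x hx τ ⟨hτ.1, hτ.2.trans ht.2⟩)
  have hD₂t := hD₂ x hx t ht
  have hD₂tC := hD₂C x hx t ht
  set J : ℝ := ∫ τ in (0:ℝ)..t, θ x τ with hJdef
  refine hk1.trans ?_
  have hDS : D₂ x t * S ≤ C * 1 := mul_le_mul hD₂tC hS1 hS0 hC.le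
  have h2 : C ^ 3 * D₂ x t ≤ C ^ 3 * C := mul_le_mul_of_nonneg_left hD₂tC (by positivity)
  have h3 : (k * C ^ 4) * (D₂ x t * S) * J ≤ (k * C ^ 4) * (C * 1) * J :=
    mul_le_mul_of_nonneg_right (mul_le_mul_of_nonneg_left hDS (by positivity)) hJ0
  nlinarith [mul_nonneg (by positivity : (0:ℝ) ≤ C ^ 4) hJ0,
    (by positivity : (0:ℝ) ≤ k * C ^ 5)]
end

section
/- Let θ ∈ C¹([0,1]) be positive with ∫₀¹ θ dx ≤ E, let v be continuous with v ≥ c₀ > 0 and ∫₀¹ v dx ≤ V, let β > 0 and η = min{1,β}/2. Then max_{x∈[0,1]} θ(x) ≤ C + C ∫₀¹ (θ^β θ_x²)/(v θ^{1+η}) dx + C max_{x∈[0,1]} θ(x)^{1+η−β} for a constant C depending only on E, V, c₀, β; consequently, if β ≥ 1+η or by Young's inequality in general, max θ ≤ C' (1 + ∫₀¹ (θ^βθ_x²)/(vθ^{1+η}) dx). -/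
/-!
At a minimum point `x₀` of `θ` we have `θ x₀ ≤ ∫ θ ≤ E`, so for `s > 0` the fundamental theorem
of calculus gives `max θ ^ s ≤ E ^ s + ∫ s θ ^ (s - 1) |θ'|`. The AM-GM inequality
`2ab ≤ a² / v + v b²` splits this integrand into the dissipation density
`θ ^ β θ'² / (v θ ^ (1 + η))` and `v θ ^ w`, provided `β - (1 + η) + w = 2 (s - 1)`.

If `β ≤ 1 + η`, take `s = 1` and `w = 1 + η - β ∈ [0, 1)`: then `∫ v θ ^ w ≤ V (max θ) ^ w` is a
sublinear power of `max θ`, which Young's inequality absorbs into the left-hand side.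
If `β > 1 + η`, take `w = 0` and `s = (β + 1 - η) / 2 > 1`: then `∫ v θ ^ w ≤ V`, and
`max θ ≤ max 1 (max θ ^ s)`.
-/

open Set Real intervalIntegral MeasureTheory

theorem sub_le_integral_abs_of_hasDerivAt {f f' : ℝ → ℝ} {a b x y : ℝ} (hab : a ≤ b)
    (hf : ∀ t ∈ Icc a b, HasDerivAt f (f' t) t) (hf' : ContinuousOn f' (Icc a b))
    (hx : x ∈ Icc a b) (hy : y ∈ Icc a b) :
    f x - f y ≤ ∫ t in a..b, |f' t| := by
  have hsub : uIcc y x ⊆ Icc a b := uIcc_subset_Icc hy hx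
  calc f x - f y = ∫ t in y..x, f' t :=
        (integral_eq_sub_of_hasDerivAt (fun t ht => hf t (hsub ht))
          ((hf'.mono hsub).intervalIntegrable)).symm
    _ ≤ ∫ t in uIoc y x, |f' t| :=
        (le_abs_self _).trans (norm_integral_le_integral_norm_uIoc (f := f'))
    _ ≤ ∫ t in Icc a b, |f' t| :=
        setIntegral_mono_set hf'.abs.integrableOn_Icc (ae_of_all _ fun _ => abs_nonneg _)
          (uIoc_subset_uIcc.trans hsub).eventuallyLE
    _ = ∫ t in a..b, |f' t| := by rw [integral_of_le hab, integral_Icc_eq_integral_Ioc]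

theorem two_mul_le_sq_div_add_mul_sq {W : ℝ} (x y : ℝ) (hW : 0 < W) :
    2 * (x * y) ≤ x ^ 2 / W + W * y ^ 2 := by
  rw [div_add' _ _ _ hW.ne', le_div_iff₀ hW]
  nlinarith [sq_nonneg (x - W * y)]

theorem two_mul_rpow_mul_abs_le {T W β η s w : ℝ} (p : ℝ) (hT : 0 < T) (hW : 0 < W)
    (hexp : β - (1 + η) + w = 2 * (s - 1)) :
    2 * (T ^ (s - 1) * |p|) ≤ T ^ β * p ^ 2 / (W * T ^ (1 + η)) + W * T ^ w := by
  have hsq : ∀ e : ℝ, (T ^ (e / 2)) ^ 2 = T ^ e := fun e => by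
    rw [sq, ← rpow_add hT, add_halves]
  have key := two_mul_le_sq_div_add_mul_sq (T ^ ((β - (1 + η)) / 2) * |p|) (T ^ (w / 2)) hW
  have hprod : T ^ ((β - (1 + η)) / 2) * |p| * T ^ (w / 2) = T ^ (s - 1) * |p| := by
    rw [mul_right_comm, ← rpow_add hT, ← add_div, hexp, mul_div_cancel_left₀ _ two_ne_zero]
  rw [hprod, mul_pow, hsq, hsq, sq_abs, rpow_sub hT β] at key
  convert key using 2
  field_simp

theorem le_max_of_le_add_mul_rpow {M a b r : ℝ} (hb : 0 ≤ b) (hr : r < 1)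
    (h : M ≤ a + b * M ^ r) : M ≤ max (2 * a) ((2 * b) ^ (1 - r)⁻¹) := by
  by_contra! hlt
  obtain ⟨ha, hbM⟩ := max_lt_iff.1 hlt
  have hr' : 0 < 1 - r := sub_pos.2 hr
  have hM0 : 0 < M := (rpow_nonneg (by positivity) _).trans_lt hbM
  have h2b : 2 * b < M ^ (1 - r) := by
    simpa [← rpow_mul (by positivity : (0:ℝ) ≤ 2 * b), inv_mul_cancel₀ hr'.ne'] using
      rpow_lt_rpow (rpow_nonneg (by positivity) _) hbM hr'
  have : 2 * (b * M ^ r) < M := by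
    calc 2 * (b * M ^ r) = 2 * b * M ^ r := by ring
      _ < M ^ (1 - r) * M ^ r := mul_lt_mul_of_pos_right h2b (rpow_pos_of_pos hM0 r)
      _ = M := by rw [← rpow_add hM0, sub_add_cancel, rpow_one]
  linarith

theorem le_max_one_of_rpow_le {M s X : ℝ} (hs : 1 ≤ s) (h : M ^ s ≤ X) : M ≤ max 1 X := by
  rcases le_total M 1 with hM | hM
  · exact hM.trans (le_max_left _ _)
  · exact (self_le_rpow_of_one_le hM hs).trans (h.trans (le_max_right _ _))

noncomputable def dissipation (β η : ℝ) (θ θ' v : ℝ → ℝ) : ℝ :=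
  ∫ x in (0:ℝ)..1, θ x ^ β * θ' x ^ 2 / (v x * θ x ^ (1 + η))

theorem dissipation_nonneg {β η : ℝ} {θ θ' v : ℝ → ℝ} (hθ : ∀ x ∈ Icc (0:ℝ) 1, 0 ≤ θ x)
    (hv : ∀ x ∈ Icc (0:ℝ) 1, 0 ≤ v x) : 0 ≤ dissipation β η θ θ' v :=
  integral_nonneg zero_le_one fun x hx => by
    have := hθ x hx
    have := hv x hx
    positivity

theorem exists_mem_Icc_le_integral {θ : ℝ → ℝ} (hθ : ContinuousOn θ (Icc 0 1)) :
    ∃ x₀ ∈ Icc (0:ℝ) 1, θ x₀ ≤ ∫ x in (0:ℝ)..1, θ x := by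
  obtain ⟨x₀, hx₀, hmin⟩ := isCompact_Icc.exists_isMinOn (nonempty_Icc.2 zero_le_one) hθ
  refine ⟨x₀, hx₀, ?_⟩
  simpa using integral_mono_on zero_le_one intervalIntegrable_const
    (hθ.intervalIntegrable_of_Icc (μ := volume) zero_le_one) hmin

theorem integral_mul_rpow_le {M V w : ℝ} {θ v : ℝ → ℝ} (hθ : ContinuousOn θ (Icc 0 1))
    (hθ₀ : ∀ x ∈ Icc (0:ℝ) 1, 0 ≤ θ x) (hθM : ∀ x ∈ Icc (0:ℝ) 1, θ x ≤ M)
    (hv : ContinuousOn v (Icc 0 1)) (hv₀ : ∀ x ∈ Icc (0:ℝ) 1, 0 ≤ v x)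
    (hvV : ∫ x in (0:ℝ)..1, v x ≤ V) (hw : 0 ≤ w) :
    ∫ x in (0:ℝ)..1, v x * θ x ^ w ≤ V * M ^ w := by
  have h0 : (0:ℝ) ∈ Icc (0:ℝ) 1 := left_mem_Icc.2 zero_le_one
  have hM : 0 ≤ M := (hθ₀ 0 h0).trans (hθM 0 h0)
  calc ∫ x in (0:ℝ)..1, v x * θ x ^ w ≤ ∫ x in (0:ℝ)..1, v x * M ^ w :=
        integral_mono_on zero_le_one
          ((hv.mul (hθ.rpow_const fun x _ => Or.inr hw)).intervalIntegrable_of_Icc zero_le_one)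
          ((hv.intervalIntegrable_of_Icc zero_le_one).mul_const _) fun x hx =>
          mul_le_mul_of_nonneg_left (rpow_le_rpow (hθ₀ x hx) (hθM x hx) hw) (hv₀ x hx)
    _ = (∫ x in (0:ℝ)..1, v x) * M ^ w := intervalIntegral.integral_mul_const _ _
    _ ≤ V * M ^ w := mul_le_mul_of_nonneg_right hvV (rpow_nonneg hM _)

theorem integral_abs_deriv_rpow_le {β η s w : ℝ} {θ θ' v : ℝ → ℝ}
    (hθ : ContinuousOn θ (Icc 0 1)) (hθ' : ContinuousOn θ' (Icc 0 1))
    (hθpos : ∀ x ∈ Icc (0:ℝ) 1, 0 < θ x) (hv : ContinuousOn v (Icc 0 1))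
    (hvpos : ∀ x ∈ Icc (0:ℝ) 1, 0 < v x) (hs : 0 < s) (hexp : β - (1 + η) + w = 2 * (s - 1)) :
    ∫ x in (0:ℝ)..1, |θ' x * s * θ x ^ (s - 1)| ≤
      s / 2 * (dissipation β η θ θ' v + ∫ x in (0:ℝ)..1, v x * θ x ^ w) := by
  have hpow (p : ℝ) : ContinuousOn (fun x => θ x ^ p) (Icc 0 1) :=
    hθ.rpow_const fun x hx => Or.inl (hθpos x hx).ne'
  have hDc : ContinuousOn (fun x => θ x ^ β * θ' x ^ 2 / (v x * θ x ^ (1 + η))) (Icc 0 1) :=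
    ((hpow β).mul (hθ'.pow 2)).div (hv.mul (hpow _)) fun x hx =>
      (mul_pos (hvpos x hx) (rpow_pos_of_pos (hθpos x hx) _)).ne'
  have hWc : ContinuousOn (fun x => v x * θ x ^ w) (Icc 0 1) := hv.mul (hpow w)
  rw [dissipation, ← integral_add (hDc.intervalIntegrable_of_Icc zero_le_one)
    (hWc.intervalIntegrable_of_Icc zero_le_one), ← intervalIntegral.integral_const_mul]
  refine integral_mono_on zero_le_one
    (((hθ'.mul continuousOn_const).mul (hpow _)).abs.intervalIntegrable_of_Icc zero_le_one)
    ((continuousOn_const.mul (hDc.add hWc)).intervalIntegrable_of_Icc zero_le_one) fun x hx => ?_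
  have hT := hθpos x hx
  calc |θ' x * s * θ x ^ (s - 1)| = s / 2 * (2 * (θ x ^ (s - 1) * |θ' x|)) := by
        rw [abs_mul, abs_mul, abs_of_pos hs, abs_of_pos (rpow_pos_of_pos hT _)]
        ring
    _ ≤ _ := by gcongr; exact two_mul_rpow_mul_abs_le (θ' x) hT (hvpos x hx) hexp

theorem exists_upper_bound_rpow_le {E V β η s w : ℝ} {θ θ' v : ℝ → ℝ}
    (hθ : ∀ x ∈ Icc (0:ℝ) 1, HasDerivAt θ (θ' x) x) (hθ' : ContinuousOn θ' (Icc 0 1))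
    (hθpos : ∀ x ∈ Icc (0:ℝ) 1, 0 < θ x) (hθE : ∫ x in (0:ℝ)..1, θ x ≤ E)
    (hv : ContinuousOn v (Icc 0 1)) (hvpos : ∀ x ∈ Icc (0:ℝ) 1, 0 < v x)
    (hvV : ∫ x in (0:ℝ)..1, v x ≤ V) (hs : 0 < s) (hw : 0 ≤ w)
    (hexp : β - (1 + η) + w = 2 * (s - 1)) :
    ∃ M, (∀ x ∈ Icc (0:ℝ) 1, θ x ≤ M) ∧
      M ^ s ≤ E ^ s + s / 2 * (dissipation β η θ θ' v + V * M ^ w) := by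
  have hθc : ContinuousOn θ (Icc 0 1) := fun x hx => (hθ x hx).continuousAt.continuousWithinAt
  obtain ⟨x₀, hx₀, hx₀E⟩ := exists_mem_Icc_le_integral hθc
  obtain ⟨x₁, hx₁, hmax⟩ := isCompact_Icc.exists_isMaxOn (nonempty_Icc.2 zero_le_one) hθc
  refine ⟨θ x₁, hmax, ?_⟩
  have hftc := sub_le_integral_abs_of_hasDerivAt zero_le_one
    (fun x hx => (hθ x hx).rpow_const (p := s) (Or.inl (hθpos x hx).ne'))
    ((hθ'.mul continuousOn_const).mul (hθc.rpow_const fun x hx => Or.inl (hθpos x hx).ne'))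
    hx₁ hx₀
  have hmin : θ x₀ ^ s ≤ E ^ s := rpow_le_rpow (hθpos x₀ hx₀).le (hx₀E.trans hθE) hs.le
  calc θ x₁ ^ s ≤ θ x₀ ^ s + ∫ x in (0:ℝ)..1, |θ' x * s * θ x ^ (s - 1)| := by linarith
    _ ≤ E ^ s + s / 2 * (dissipation β η θ θ' v + ∫ x in (0:ℝ)..1, v x * θ x ^ w) :=
        add_le_add hmin (integral_abs_deriv_rpow_le hθc hθ' hθpos hv hvpos hs hexp)
    _ ≤ E ^ s + s / 2 * (dissipation β η θ θ' v + V * θ x₁ ^ w) := by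
        gcongr
        exact integral_mul_rpow_le hθc (fun x hx => (hθpos x hx).le) hmax hv
          (fun x hx => (hvpos x hx).le) hvV hw

theorem exists_le_mul_one_add_dissipation {E V β η : ℝ} (hE : 0 ≤ E) (hV : 0 ≤ V)
    (hηβ : η < β) :
    ∃ C > 0, ∀ θ θ' v : ℝ → ℝ,
      (∀ x ∈ Icc (0:ℝ) 1, HasDerivAt θ (θ' x) x) → ContinuousOn θ' (Icc 0 1) →
      (∀ x ∈ Icc (0:ℝ) 1, 0 < θ x) → ∫ x in (0:ℝ)..1, θ x ≤ E →
      ContinuousOn v (Icc 0 1) → (∀ x ∈ Icc (0:ℝ) 1, 0 < v x) → ∫ x in (0:ℝ)..1, v x ≤ V →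
      ∀ x ∈ Icc (0:ℝ) 1, θ x ≤ C * (1 + dissipation β η θ θ' v) := by
  rcases le_or_gt β (1 + η) with hβη | hβη
  · refine ⟨2 * E + V ^ (β - η)⁻¹ + 1, by positivity, ?_⟩
    intro θ θ' v hθ hθ' hθpos hθE hv hvpos hvV x hx
    obtain ⟨M, hθM, hM⟩ := exists_upper_bound_rpow_le (β := β) (η := η) (s := 1) (w := 1 + η - β)
      hθ hθ' hθpos hθE hv hvpos hvV one_pos (by linarith) (by ring)
    have hD := dissipation_nonneg (β := β) (η := η) (θ' := θ')
      (fun y hy => (hθpos y hy).le) (fun y hy => (hvpos y hy).le)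
    have hK : 0 ≤ V ^ (β - η)⁻¹ := rpow_nonneg hV _
    rw [rpow_one, rpow_one, mul_add, ← add_assoc, ← mul_assoc] at hM
    have hM' := le_max_of_le_add_mul_rpow (by positivity) (by linarith) hM
    rw [show 1 - (1 + η - β) = β - η by ring, show 2 * (1 / 2 * V) = V by ring] at hM'
    refine (hθM x hx).trans (hM'.trans (max_le ?_ ?_)) <;> nlinarith
  · set s := (β + 1 - η) / 2 with hs_def
    have hs : 1 < s := by rw [hs_def]; linarith
    have hEs : 0 ≤ E ^ s := rpow_nonneg hE s
    have hsV : 0 ≤ s / 2 * (1 + V) := by positivity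
    refine ⟨1 + E ^ s + s / 2 * (1 + V), by linarith, ?_⟩
    intro θ θ' v hθ hθ' hθpos hθE hv hvpos hvV x hx
    obtain ⟨M, hθM, hM⟩ := exists_upper_bound_rpow_le (β := β) (η := η) (s := s) (w := 0)
      hθ hθ' hθpos hθE hv hvpos hvV (by linarith) le_rfl (by rw [hs_def]; ring)
    have hD := dissipation_nonneg (β := β) (η := η) (θ' := θ')
      (fun y hy => (hθpos y hy).le) (fun y hy => (hvpos y hy).le)
    rw [rpow_zero, mul_one] at hM
    have hM' := le_max_one_of_rpow_le hs.le hM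
    have hsVD : 0 ≤ s / 2 * V * dissipation β η θ θ' v := by positivity
    refine (hθM x hx).trans (hM'.trans (max_le ?_ ?_)) <;> nlinarith

theorem max_temperature_estimate (E V c₀ β : ℝ)
    (hE : 0 < E) (hV : 0 < V) (hc₀ : 0 < c₀) (hβ : 0 < β) :
    ∃ C > 0, ∃ C' > 0, ∀ θ θ' v : ℝ → ℝ,
      (∀ x ∈ Set.Icc (0:ℝ) 1, HasDerivAt θ (θ' x) x) →
      ContinuousOn θ' (Set.Icc 0 1) →
      (∀ x ∈ Set.Icc (0:ℝ) 1, 0 < θ x) →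
      (∫ x in (0:ℝ)..1, θ x) ≤ E →
      ContinuousOn v (Set.Icc 0 1) →
      (∀ x ∈ Set.Icc (0:ℝ) 1, c₀ ≤ v x) →
      (∫ x in (0:ℝ)..1, v x) ≤ V →
      (∀ x ∈ Set.Icc (0:ℝ) 1,
        θ x ≤ C
          + C * (∫ y in (0:ℝ)..1,
              θ y ^ β * θ' y ^ 2 / (v y * θ y ^ (1 + min 1 β / 2)))
          + C * ⨆ y : Set.Icc (0:ℝ) 1, θ y ^ (1 + min 1 β / 2 - β)) ∧
      (∀ x ∈ Set.Icc (0:ℝ) 1,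
        θ x ≤ C' * (1 + ∫ y in (0:ℝ)..1,
            θ y ^ β * θ' y ^ 2 / (v y * θ y ^ (1 + min 1 β / 2)))) := by
  have hη : min 1 β / 2 < β := by linarith [min_le_right 1 β]
  obtain ⟨C, hC, hbound⟩ := exists_le_mul_one_add_dissipation hE.le hV.le hη
  refine ⟨C, hC, C, hC, fun θ θ' v hθ hθ' hθpos hθE hv hvc₀ hvV => ?_⟩
  have hθbound := hbound θ θ' v hθ hθ' hθpos hθE hv (fun x hx => hc₀.trans_le (hvc₀ x hx)) hvV
  refine ⟨fun x hx => ?_, hθbound⟩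
  have hsup : 0 ≤ ⨆ y : Icc (0:ℝ) 1, θ y ^ (1 + min 1 β / 2 - β) :=
    Real.iSup_nonneg fun y => rpow_nonneg (hθpos y y.2).le _
  have hθx := hθbound x hx
  rw [dissipation, mul_add, mul_one] at hθx
  linarith [mul_nonneg hC.le hsup]
end
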